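/- Let (X,Y) be a source with X binary, and (X₁,Y₁),(X₂,Y₂) independent copies. Set U₁ = X₁⊕X₂ and U₂ = X₂. Then Z(U₁ | Y₁,Y₂) + Z(U₂ | Y₁,Y₂,U₁) ≤ 2·Z(X|Y). -/

import Mathlib

/-!
Write `g y = √(p(0,y) p(1,y))`, `m y = p(0,y) + p(1,y)` and `Z = Z(X|Y) = 2 Σ g`.
Given `U₁ = u`, the pair `(X₁, X₂)` is `(u ⊕ U₂, U₂)`, so the summand of `Z(U₂ | Y₁,Y₂,U₁)`
is `√(p(u,y₁) p(u⊕1,y₁) p(0,y₂) p(1,y₂)) = g y₁ g y₂` and `Z(U₂ | Y₁,Y₂,U₁) = Z²`.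
For `U₁`, an elementary inequality bounds the summand at `(y₁, y₂)` by
`g y₁ m y₂ + m y₁ g y₂ - 2 g y₁ g y₂`; summing with `Σ m = 1` gives `Z(U₁ | Y₁,Y₂) ≤ 2Z - Z²`.
-/

open Real

/-- Conditional source Bhattacharyya parameter
`Z(X|W) = 2 Σ_w √(q(0,w) q(1,w))` for a joint pmf `q x w` with binary `x`. -/
noncomputable def bhat {β : Type*} (q : Bool → β → ℝ) : ℝ :=
  2 * ∑' w : β, Real.sqrt (q false w * q true w)

theorem two_mul_sqrt_mul_le_add {a b : ℝ} (ha : 0 ≤ a) (hb : 0 ≤ b) :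
    2 * √(a * b) ≤ a + b := by
  have : √(a * b) ≤ (a + b) / 2 :=
    sqrt_le_iff.2 ⟨by positivity, by nlinarith [sq_nonneg (a - b)]⟩
  linarith

theorem sqrt_mul_add_mul_le {a b c d : ℝ} (ha : 0 ≤ a) (hb : 0 ≤ b) (hc : 0 ≤ c)
    (hd : 0 ≤ d) :
    √((a * c + b * d) * (b * c + a * d)) ≤
      √(a * b) * (c + d) + (a + b) * √(c * d) - 2 * (√(a * b) * √(c * d)) := by
  set s := √(a * b)
  set t := √(c * d)
  have hs : s ^ 2 = a * b := sq_sqrt (mul_nonneg ha hb)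
  have ht : t ^ 2 = c * d := sq_sqrt (mul_nonneg hc hd)
  have hs0 : 0 ≤ s := sqrt_nonneg _
  have ht0 : 0 ≤ t := sqrt_nonneg _
  have hs2 : 0 ≤ a + b - 2 * s := by linarith [two_mul_sqrt_mul_le_add ha hb]
  have ht2 : 0 ≤ c + d - 2 * t := by linarith [two_mul_sqrt_mul_le_add hc hd]
  have gap : (s * (c + d) + (a + b) * t - 2 * (s * t)) ^ 2 - (a * c + b * d) * (b * c + a * d)
      = 2 * (s * t) * ((a + b - 2 * s) * (c + d - 2 * t)) := by
    linear_combination ((c - d) ^ 2 - 4 * (t ^ 2 - c * d)) * hs + (a - b) ^ 2 * ht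
  refine sqrt_le_iff.2 ⟨by nlinarith, ?_⟩
  nlinarith [mul_nonneg (mul_nonneg hs0 ht0) (mul_nonneg hs2 ht2)]

theorem HasSum.mul_of_nonneg {ι κ : Type*} {f : ι → ℝ} {g : κ → ℝ} {a b : ℝ}
    (hf : HasSum f a) (hg : HasSum g b) (hf0 : 0 ≤ f) (hg0 : 0 ≤ g) :
    HasSum (fun x : ι × κ => f x.1 * g x.2) (a * b) :=
  hf.mul hg (hf.summable.mul_of_nonneg hg.summable hf0 hg0)

section Polarization

variable {β : Type*} (p : Bool → β → ℝ)

/-- The joint pmf of `(U₁; Y₁, Y₂)`. -/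
def polarMinus : Bool → β × β → ℝ :=
  fun u₁ y => ∑ x₂ : Bool, p (xor u₁ x₂) y.1 * p x₂ y.2

/-- The joint pmf of `(U₂; Y₁, Y₂, U₁)`. -/
def polarPlus : Bool → β × β × Bool → ℝ :=
  fun u₂ w => p (xor w.2.2 u₂) w.1 * p u₂ w.2.1

variable {p}

theorem hasSum_marginal (hsum : HasSum (fun z : Bool × β => p z.1 z.2) 1) :
    HasSum (fun y => p false y + p true y) 1 := by
  refine ((Equiv.prodComm β Bool).hasSum_iff.2 hsum).prod_fiberwise fun y => ?_
  simpa [Fintype.sum_bool, add_comm] using hasSum_fintype (fun x : Bool => p x y)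

theorem summable_sqrt_mul (hp : ∀ x y, 0 ≤ p x y)
    (hsum : HasSum (fun z : Bool × β => p z.1 z.2) 1) :
    Summable fun y => √(p false y * p true y) :=
  Summable.of_nonneg_of_le (fun _ => sqrt_nonneg _)
    (fun y => by linarith [two_mul_sqrt_mul_le_add (hp false y) (hp true y)])
    ((hasSum_marginal hsum).summable.div_const 2)

theorem bhat_polarPlus (hp : ∀ x y, 0 ≤ p x y)
    (hg : Summable fun y => √(p false y * p true y)) :
    bhat (polarPlus p) = bhat p ^ 2 := by
  set g := fun y => √(p false y * p true y)
  have hg0 : 0 ≤ g := fun _ => sqrt_nonneg _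
  have summand : ∀ w : β × β × Bool,
      √(polarPlus p false w * polarPlus p true w) = g w.1 * (g w.2.1 * 1) := by
    rintro ⟨y₁, y₂, u⟩
    rw [mul_one, ← sqrt_mul (mul_nonneg (hp _ _) (hp _ _))]
    cases u <;> simp only [polarPlus, Bool.xor_false, Bool.xor_true, Bool.not_false,
      Bool.not_true] <;> ring_nf
  have hsum : HasSum (fun w : β × β × Bool => g w.1 * (g w.2.1 * 1))
      ((∑' y, g y) * ((∑' y, g y) * 2)) := by
    refine hg.hasSum.mul_of_nonneg (hg.hasSum.mul_of_nonneg ?_ hg0 fun _ => zero_le_one)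
      hg0 fun _ => mul_nonneg (hg0 _) zero_le_one
    simpa using hasSum_fintype (fun _ : Bool => (1 : ℝ))
  simp only [bhat, summand, hsum.tsum_eq]
  ring

theorem bhat_polarMinus_le (hp : ∀ x y, 0 ≤ p x y)
    (hsum : HasSum (fun z : Bool × β => p z.1 z.2) 1) :
    bhat (polarMinus p) ≤ 2 * bhat p - bhat p ^ 2 := by
  set g := fun y => √(p false y * p true y)
  set m := fun y => p false y + p true y
  have hg0 : 0 ≤ g := fun _ => sqrt_nonneg _
  have hm0 : 0 ≤ m := fun y => add_nonneg (hp _ _) (hp _ _)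
  have hg := (summable_sqrt_mul hp hsum).hasSum
  have hm : HasSum m 1 := hasSum_marginal hsum
  have bound : HasSum (fun y : β × β => g y.1 * m y.2 + m y.1 * g y.2 - 2 * (g y.1 * g y.2))
      ((∑' y, g y) * 1 + 1 * (∑' y, g y) - 2 * ((∑' y, g y) * (∑' y, g y))) :=
    ((hg.mul_of_nonneg hm hg0 hm0).add (hm.mul_of_nonneg hg hm0 hg0)).sub
      ((hg.mul_of_nonneg hg hg0 hg0).mul_left 2)
  have pointwise : ∀ y : β × β, √(polarMinus p false y * polarMinus p true y) ≤
      g y.1 * m y.2 + m y.1 * g y.2 - 2 * (g y.1 * g y.2) := by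
    rintro ⟨y₁, y₂⟩
    have key := sqrt_mul_add_mul_le (hp false y₁) (hp true y₁) (hp false y₂) (hp true y₂)
    simp only [polarMinus, Fintype.sum_bool, Bool.not_false, Bool.not_true, Bool.false_xor,
      Bool.true_xor] at key ⊢
    convert key using 3 <;> ring
  have hle := Summable.tsum_le_tsum pointwise
    (.of_nonneg_of_le (fun _ => sqrt_nonneg _) pointwise bound.summable) bound.summable
  rw [bound.tsum_eq] at hle
  simp only [bhat]
  nlinarith

end Polarization

/-- `Z(U₁ | Y₁,Y₂) + Z(U₂ | Y₁,Y₂,U₁) ≤ 2 Z(X|Y)` for `U₁ = X₁⊕X₂`, `U₂ = X₂`. -/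
theorem stmt5 (p : Bool → ℕ → ℝ) (hp : ∀ x y, 0 ≤ p x y)
    (hsum : HasSum (fun z : Bool × ℕ => p z.1 z.2) 1) :
    bhat (fun (u₁ : Bool) (y : ℕ × ℕ) =>
        ∑ x₂ : Bool, p (xor u₁ x₂) y.1 * p x₂ y.2) +
      bhat (fun (u₂ : Bool) (w : ℕ × ℕ × Bool) =>
        p (xor w.2.2 u₂) w.1 * p u₂ w.2.1) ≤ 2 * bhat p := by
  change bhat (polarMinus p) + bhat (polarPlus p) ≤ 2 * bhat p
  rw [bhat_polarPlus hp (summable_sqrt_mul hp hsum)]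
  linarith [bhat_polarMinus_le hp hsum]
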